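/- Let {A₁,…,A_r} be a pairwise orthogonal set (in Hilbert–Schmidt inner product) of complex matrices of the same size satisfying ‖Σᵢ Aᵢ‖₁ = Σᵢ ‖Aᵢ‖₁. Then AᵢAⱼ* = 0 and Aᵢ*Aⱼ = 0 for all i ≠ j. -/

import Mathlib

/-!
Let `U` be the partial isometry of the polar decomposition of `S = ∑ Aᵢ`, so `U S = |S|` and
`‖S‖₁ = Re Tr (U S) = ∑ Re Tr (U Aᵢ)`. Writing `A = X Yᴴ` with `X = Vᴴ |A|^{1/2}`,
`Y = |A|^{1/2}` (`V` the polar isometry of `A`), the Cauchy–Schwarz inequality for the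
Hilbert–Schmidt product gives `Re Tr (U A) ≤ ‖A‖₁` for every partial isometry `U`, with equality
only if `U X = Y`, i.e. `U A = |A|`. So the hypothesis forces `U Aᵢ = |Aᵢ|` for every `i`, and then
`Aᵢ = UᴴU Aᵢ`. Hence `Aᵢᴴ Aⱼ = |Aᵢ| |Aⱼ|` and `Aᵢ Aⱼᴴ = Uᴴ |Aᵢ| |Aⱼ| U`, while `|Aᵢ| |Aⱼ|` is a
product of positive semidefinite matrices of trace `Tr (Aᵢᴴ Aⱼ) = 0`, hence zero.
-/

open Matrix Kronecker BigOperators ComplexOrder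

noncomputable section

/-- The positive semidefinite square root of a positive semidefinite matrix
(the definition removed from Mathlib, restored with its old value). -/
noncomputable def Matrix.PosSemidef.sqrt {n 𝕜 : Type*} [Fintype n] [DecidableEq n] [RCLike 𝕜]
    {A : Matrix n n 𝕜} (hA : A.PosSemidef) : Matrix n n 𝕜 :=
  hA.1.eigenvectorUnitary.1 * diagonal ((↑) ∘ (Real.sqrt ∘ hA.1.eigenvalues)) *
    (star hA.1.eigenvectorUnitary : Matrix n n 𝕜)

/-- Trace norm (sum of singular values) of a complex matrix. -/
noncomputable def traceNorm {l m : Type*} [Fintype l] [Fintype m] [DecidableEq m]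
    (A : Matrix l m ℂ) : ℝ :=
  ((Matrix.posSemidef_conjTranspose_mul_self A).sqrt.trace).re

/-- Frobenius norm. -/
noncomputable def frobNorm {l m : Type*} [Fintype l] [Fintype m]
    (A : Matrix l m ℂ) : ℝ :=
  Real.sqrt ((Aᴴ * A).trace.re)

/-- Partial transpose on the first tensor factor. -/
def ptranspose {a b : Type*} (X : Matrix (a × b) (a × b) ℂ) : Matrix (a × b) (a × b) ℂ :=
  Matrix.of fun p q => X (q.1, p.2) (p.1, q.2)

/-- Outer product `u v*`. -/
def outer {a : Type*} (u v : a → ℂ) : Matrix a a ℂ :=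
  Matrix.of fun p q => u p * star (v q)

/-- Density operator: positive semidefinite with trace one. -/
def IsDensity {a : Type*} [Fintype a] (ρ : Matrix a a ℂ) : Prop :=
  ρ.PosSemidef ∧ ρ.trace = 1

/-- Maximally entangled unit vector in `ℂⁿ ⊗ ℂᵐ`. -/
def MaxEntangled (n m : ℕ) (u : Fin n × Fin m → ℂ) : Prop :=
  ∃ (x : Fin (min n m) → EuclideanSpace ℂ (Fin n))
    (y : Fin (min n m) → EuclideanSpace ℂ (Fin m)),
    Orthonormal ℂ x ∧ Orthonormal ℂ y ∧
      ∀ p : Fin n × Fin m,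
        u p = (1 / Real.sqrt (min n m) : ℝ) * ∑ i, x i p.1 * y i p.2

/-- Extension `Φ ⊗ I` of a matrix map to a system with ancilla `c`. -/
def tensorExt {a b c : Type*} [Fintype a] [DecidableEq a] [Fintype c]
    (Φ : Matrix a a ℂ →ₗ[ℂ] Matrix b b ℂ)
    (X : Matrix (a × c) (a × c) ℂ) : Matrix (b × c) (b × c) ℂ :=
  Matrix.of fun p q => Φ (Matrix.of fun i j => X (i, p.2) (j, q.2)) p.1 q.1

/-- Quantum channel: completely positive and trace preserving. -/
def IsChannel {a b : Type*} [Fintype a] [DecidableEq a] [Fintype b]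
    (Φ : Matrix a a ℂ →ₗ[ℂ] Matrix b b ℂ) : Prop :=
  (∀ X, (Φ X).trace = X.trace) ∧
    ∀ (k : ℕ) (X : Matrix (a × Fin k) (a × Fin k) ℂ),
      X.PosSemidef → (tensorExt Φ X).PosSemidef

/-- Partial trace over the second tensor factor. -/
def ptraceRight {a b : Type*} [Fintype b] (M : Matrix (a × b) (a × b) ℂ) :
    Matrix a a ℂ :=
  Matrix.of fun i k => ∑ c, M (i, c) (k, c)

/-- Partial trace over the first tensor factor. -/
def ptraceLeft {a b : Type*} [Fintype a] (M : Matrix (a × b) (a × b) ℂ) :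
    Matrix b b ℂ :=
  Matrix.of fun i k => ∑ c, M (c, i) (c, k)

/-- Canonical maximally entangled state `τ = (1/d) vec(I)vec(I)*` on `a ⊗ a`. -/
noncomputable def tauGen {a : Type*} [Fintype a] [DecidableEq a] :
    Matrix (a × a) (a × a) ℂ :=
  Matrix.of fun p q =>
    (Fintype.card a : ℂ)⁻¹ * (if p.1 = p.2 then 1 else 0) * (if q.1 = q.2 then 1 else 0)

/-- The operator `τ ⊗ σ` on `a ⊗ (a ⊗ r)`. -/
noncomputable def tauSigma {a r : Type*} [Fintype a] [DecidableEq a]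
    (σ : Matrix r r ℂ) : Matrix (a × (a × r)) (a × (a × r)) ℂ :=
  Matrix.of fun p q => tauGen (p.1, p.2.1) (q.1, q.2.1) * σ p.2.2 q.2.2

/-- Fidelity of two positive semidefinite matrices. -/
noncomputable def fidelity {a : Type*} [Fintype a] [DecidableEq a]
    {P Q : Matrix a a ℂ} (hP : P.PosSemidef) (hQ : Q.PosSemidef) : ℝ :=
  traceNorm (hP.sqrt * hQ.sqrt)

section Sqrt

variable {n 𝕜 : Type*} [Fintype n] [DecidableEq n] [RCLike 𝕜] {A : Matrix n n 𝕜}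

theorem Matrix.PosSemidef.posSemidef_sqrt (hA : A.PosSemidef) : hA.sqrt.PosSemidef := by
  rw [PosSemidef.sqrt, star_eq_conjTranspose]
  exact (PosSemidef.diagonal fun _ => RCLike.ofReal_nonneg.mpr (Real.sqrt_nonneg _))
    |>.mul_mul_conjTranspose_same _

theorem Matrix.PosSemidef.sqrt_mul_self (hA : A.PosSemidef) : hA.sqrt * hA.sqrt = A := by
  conv_rhs => rw [hA.1.spectral_theorem]
  rw [PosSemidef.sqrt, ← Unitary.conjStarAlgAut_apply (S := 𝕜), ← map_mul, diagonal_mul_diagonal']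
  congr 2
  funext k
  simp [← RCLike.ofReal_mul, Real.mul_self_sqrt (hA.eigenvalues_nonneg k)]

-- `Tr (R² T²) = Tr ((T R)ᴴ (T R))` for the square roots `R`, `T` of `P`, `Q`.
theorem Matrix.PosSemidef.mul_eq_zero_of_trace_mul_eq_zero {P Q : Matrix n n 𝕜}
    (hP : P.PosSemidef) (hQ : Q.PosSemidef) (h : (P * Q).trace = 0) : P * Q = 0 := by
  obtain ⟨R, hR, rfl⟩ : ∃ R : Matrix n n 𝕜, Rᴴ = R ∧ R * R = P :=
    ⟨hP.sqrt, hP.posSemidef_sqrt.1, hP.sqrt_mul_self⟩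
  obtain ⟨T, hT, rfl⟩ : ∃ T : Matrix n n 𝕜, Tᴴ = T ∧ T * T = Q :=
    ⟨hQ.sqrt, hQ.posSemidef_sqrt.1, hQ.sqrt_mul_self⟩
  have hTR : T * R = 0 := by
    rw [← trace_conjTranspose_mul_self_eq_zero_iff, conjTranspose_mul, hR, hT, ← h,
      ← Matrix.mul_assoc, trace_mul_comm]
    simp only [Matrix.mul_assoc]
  have hRT : R * T = 0 := by
    rw [← hR, ← hT, ← conjTranspose_mul, hTR, conjTranspose_zero]
  rw [Matrix.mul_assoc, ← Matrix.mul_assoc R T, hRT, Matrix.zero_mul, Matrix.mul_zero]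

end Sqrt

namespace Matrix

variable {m n k : Type*} [Fintype m] [Fintype n] [Fintype k]

section HilbertSchmidt

lemma re_trace_conjTranspose_mul_self_nonneg (M : Matrix m n ℂ) : 0 ≤ (Mᴴ * M).trace.re :=
  (Complex.nonneg_iff.mp (posSemidef_conjTranspose_mul_self M).trace_nonneg).1

lemma re_trace_conjTranspose_mul_self_eq_zero_iff {M : Matrix m n ℂ} :
    (Mᴴ * M).trace.re = 0 ↔ M = 0 := by
  rw [← trace_conjTranspose_mul_self_eq_zero_iff]
  have him := (Complex.nonneg_iff.mp (posSemidef_conjTranspose_mul_self M).trace_nonneg).2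
  exact ⟨fun hre => Complex.ext hre him.symm, fun h => by rw [h, Complex.zero_re]⟩

lemma re_trace_conjTranspose_mul_self_sub (X Y : Matrix m n ℂ) :
    ((X - Y)ᴴ * (X - Y)).trace.re =
      (Xᴴ * X).trace.re + (Yᴴ * Y).trace.re - 2 * (Yᴴ * X).trace.re := by
  have hswap : (Xᴴ * Y).trace.re = (Yᴴ * X).trace.re := by
    rw [← conjTranspose_conjTranspose X, ← conjTranspose_mul, trace_conjTranspose,
      conjTranspose_conjTranspose, Complex.star_def, Complex.conj_re]
  simp only [conjTranspose_sub, Matrix.sub_mul, Matrix.mul_sub, trace_sub, Complex.sub_re, hswap]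
  ring

lemma re_trace_conjTranspose_mul_mul_le [DecidableEq m] {U : Matrix n m ℂ}
    (hU : (1 - Uᴴ * U).PosSemidef) (X : Matrix m k ℂ) :
    ((U * X)ᴴ * (U * X)).trace.re ≤ (Xᴴ * X).trace.re := by
  have := (Complex.nonneg_iff.mp (hU.conjTranspose_mul_mul_same X).trace_nonneg).1
  rw [Matrix.mul_sub, Matrix.sub_mul, trace_sub, Complex.sub_re, Matrix.mul_one] at this
  rw [conjTranspose_mul]
  simp only [Matrix.mul_assoc] at this ⊢
  linarith

-- Cauchy–Schwarz for `Re Tr (U X Yᴴ) = Re ⟪Y, U X⟫`, with the defect `‖U X - Y‖²` kept.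
lemma two_mul_re_trace_add_le [DecidableEq m] {U : Matrix n m ℂ} (hU : (1 - Uᴴ * U).PosSemidef)
    {X : Matrix m k ℂ} {Y : Matrix n k ℂ} (hXY : (Xᴴ * X).trace.re ≤ (Yᴴ * Y).trace.re) :
    2 * (U * (X * Yᴴ)).trace.re + ((U * X - Y)ᴴ * (U * X - Y)).trace.re ≤
      2 * (Yᴴ * Y).trace.re := by
  rw [re_trace_conjTranspose_mul_self_sub, ← Matrix.mul_assoc, trace_mul_comm]
  linarith [re_trace_conjTranspose_mul_mul_le hU X]

end HilbertSchmidt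

def IsPartialIsometry (U : Matrix m n ℂ) : Prop :=
  U * Uᴴ * U = U

lemma IsPartialIsometry.conjTranspose {U : Matrix m n ℂ} (hU : U.IsPartialIsometry) :
    Uᴴ.IsPartialIsometry := by
  rw [IsPartialIsometry, conjTranspose_conjTranspose]
  conv_rhs => rw [← hU]
  simp only [conjTranspose_mul, conjTranspose_conjTranspose, Matrix.mul_assoc]

lemma IsPartialIsometry.isIdempotentElem_conjTranspose_mul_self {U : Matrix m n ℂ}
    (hU : U.IsPartialIsometry) : IsIdempotentElem (Uᴴ * U) := by
  rw [IsIdempotentElem, Matrix.mul_assoc, ← Matrix.mul_assoc U, hU]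

lemma IsPartialIsometry.posSemidef_one_sub [DecidableEq n] {U : Matrix m n ℂ}
    (hU : U.IsPartialIsometry) : (1 - Uᴴ * U).PosSemidef := by
  have hself : (1 - Uᴴ * U)ᴴ * (1 - Uᴴ * U) = 1 - Uᴴ * U := by
    rw [conjTranspose_sub, conjTranspose_one, conjTranspose_mul, conjTranspose_conjTranspose,
      Matrix.sub_mul, Matrix.mul_sub, Matrix.mul_sub,
      hU.isIdempotentElem_conjTranspose_mul_self.eq]
    simp
  exact hself ▸ posSemidef_conjTranspose_mul_self _

section Modulus

variable [DecidableEq n]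

def modulus (A : Matrix m n ℂ) : Matrix n n ℂ :=
  (posSemidef_conjTranspose_mul_self A).sqrt

lemma posSemidef_modulus (A : Matrix m n ℂ) : (modulus A).PosSemidef :=
  PosSemidef.posSemidef_sqrt _

lemma modulus_mul_self (A : Matrix m n ℂ) : modulus A * modulus A = Aᴴ * A :=
  PosSemidef.sqrt_mul_self _

lemma traceNorm_eq_re_trace_modulus (A : Matrix m n ℂ) :
    traceNorm A = (modulus A).trace.re :=
  rfl

-- `U = |A|⁺ Aᴴ`, where `|A|⁺` inverts the eigenvalues of `|A|`; the convention `0⁻¹ = 0` makes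
-- this the pseudo-inverse.
lemma exists_isPartialIsometry_mul_eq_modulus (A : Matrix m n ℂ) :
    ∃ U : Matrix n m ℂ, U.IsPartialIsometry ∧ U * A = modulus A := by
  set hH := (posSemidef_conjTranspose_mul_self A).1
  set φ := Unitary.conjStarAlgAut ℂ (Matrix n n ℂ) hH.eigenvectorUnitary
  set t : n → ℂ := fun k => (Real.sqrt (hH.eigenvalues k) : ℂ)
  have hmod : modulus A = φ (diagonal t) := rfl
  have hAA : Aᴴ * A = φ (diagonal fun k => t k * t k) := by
    rw [← modulus_mul_self, hmod, ← map_mul, diagonal_mul_diagonal]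
  have hinv : (φ (diagonal t⁻¹))ᴴ = φ (diagonal t⁻¹) := by
    rw [← star_eq_conjTranspose, ← map_star, star_eq_conjTranspose, diagonal_conjTranspose]
    congr 2
    funext k
    simp [t, Complex.conj_ofReal]
  refine ⟨φ (diagonal t⁻¹) * Aᴴ, ?_, ?_⟩
  · rw [IsPartialIsometry, conjTranspose_mul, conjTranspose_conjTranspose, hinv]
    simp only [← Matrix.mul_assoc]
    rw [Matrix.mul_assoc _ Aᴴ A, hAA, ← map_mul, ← map_mul, ← map_mul]
    simp only [diagonal_mul_diagonal]
    congr 3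
    funext k
    rw [Pi.inv_apply]
    rcases eq_or_ne (t k) 0 with h | h
    · simp [h]
    · field_simp
  · rw [Matrix.mul_assoc, hAA, ← map_mul, diagonal_mul_diagonal, hmod]
    congr 2
    funext k
    rw [Pi.inv_apply, ← _root_.mul_assoc, inv_mul_mul_self]

lemma IsPartialIsometry.conjTranspose_mul_self_mul_of_mul_eq_modulus {U : Matrix n m ℂ}
    (hU : U.IsPartialIsometry) {A : Matrix m n ℂ} (hUA : U * A = modulus A) :
    Uᴴ * U * A = A := by
  have hC : (Uᴴ * U)ᴴ = Uᴴ * U := by rw [conjTranspose_mul, conjTranspose_conjTranspose]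
  have hCA : Aᴴ * (Uᴴ * U * A) = Aᴴ * A := by
    calc Aᴴ * (Uᴴ * U * A) = (U * A)ᴴ * (U * A) := by
          simp only [conjTranspose_mul, Matrix.mul_assoc]
      _ = Aᴴ * A := by rw [hUA, (posSemidef_modulus A).1.eq, modulus_mul_self]
  rw [← sub_eq_zero, ← conjTranspose_mul_self_eq_zero, conjTranspose_sub, conjTranspose_mul,
    hC, Matrix.sub_mul, Matrix.mul_sub, Matrix.mul_sub, Matrix.mul_assoc Aᴴ (Uᴴ * U) (Uᴴ * U * A),
    ← Matrix.mul_assoc (Uᴴ * U) (Uᴴ * U), hU.isIdempotentElem_conjTranspose_mul_self.eq,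
    Matrix.mul_assoc Aᴴ (Uᴴ * U) A, hCA, sub_self]

lemma exists_eq_mul_conjTranspose_and_mul_conjTranspose_eq_modulus (A : Matrix m n ℂ) :
    ∃ (X : Matrix m n ℂ) (Y : Matrix n n ℂ), A = X * Yᴴ ∧
      (Xᴴ * X).trace.re ≤ (Yᴴ * Y).trace.re ∧ Y * Yᴴ = modulus A := by
  obtain ⟨U, hU, hUA⟩ := exists_isPartialIsometry_mul_eq_modulus A
  set Y := (posSemidef_modulus A).sqrt
  have hY : Yᴴ = Y := (posSemidef_modulus A).posSemidef_sqrt.1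
  have hYY : Y * Yᴴ = modulus A := by rw [hY, PosSemidef.sqrt_mul_self]
  refine ⟨Uᴴ * Y, Y, ?_, ?_, hYY⟩
  · rw [Matrix.mul_assoc, hYY, ← hUA, ← Matrix.mul_assoc,
      hU.conjTranspose_mul_self_mul_of_mul_eq_modulus hUA]
  · simpa only [conjTranspose_conjTranspose] using
      re_trace_conjTranspose_mul_mul_le hU.conjTranspose.posSemidef_one_sub Y

variable {U : Matrix n m ℂ}

lemma IsPartialIsometry.re_trace_mul_le_traceNorm [DecidableEq m] (hU : U.IsPartialIsometry)
    (A : Matrix m n ℂ) : (U * A).trace.re ≤ traceNorm A := by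
  obtain ⟨X, Y, rfl, hXY, hY⟩ := exists_eq_mul_conjTranspose_and_mul_conjTranspose_eq_modulus A
  have key := two_mul_re_trace_add_le hU.posSemidef_one_sub hXY
  rw [traceNorm_eq_re_trace_modulus, ← hY, trace_mul_comm Y]
  linarith [re_trace_conjTranspose_mul_self_nonneg (U * X - Y)]

lemma IsPartialIsometry.mul_eq_modulus_of_traceNorm_le [DecidableEq m]
    (hU : U.IsPartialIsometry) {A : Matrix m n ℂ} (h : traceNorm A ≤ (U * A).trace.re) :
    U * A = modulus A := by
  obtain ⟨X, Y, rfl, hXY, hY⟩ := exists_eq_mul_conjTranspose_and_mul_conjTranspose_eq_modulus A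
  have key := two_mul_re_trace_add_le hU.posSemidef_one_sub hXY
  rw [traceNorm_eq_re_trace_modulus, ← hY, trace_mul_comm Y] at h
  have hUX : U * X = Y := by
    rw [← sub_eq_zero, ← re_trace_conjTranspose_mul_self_eq_zero_iff]
    linarith [re_trace_conjTranspose_mul_self_nonneg (U * X - Y)]
  rw [← hY, ← Matrix.mul_assoc, hUX]

lemma IsPartialIsometry.mul_conjTranspose_eq_zero_and_conjTranspose_mul_eq_zero
    (hU : U.IsPartialIsometry) {A B : Matrix m n ℂ} (hA : U * A = modulus A)
    (hB : U * B = modulus B) (horth : (Aᴴ * B).trace = 0) : A * Bᴴ = 0 ∧ Aᴴ * B = 0 := by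
  have hAB : Aᴴ * B = modulus A * modulus B := by
    rw [← (posSemidef_modulus A).1.eq, ← hA, ← hB, conjTranspose_mul, Matrix.mul_assoc,
      ← Matrix.mul_assoc Uᴴ, hU.conjTranspose_mul_self_mul_of_mul_eq_modulus hB]
  have hzero : modulus A * modulus B = 0 :=
    (posSemidef_modulus A).mul_eq_zero_of_trace_mul_eq_zero (posSemidef_modulus B)
      (hAB ▸ horth)
  refine ⟨?_, hAB.trans hzero⟩
  calc A * Bᴴ = (Uᴴ * U * A) * (Uᴴ * U * B)ᴴ := by
        rw [hU.conjTranspose_mul_self_mul_of_mul_eq_modulus hA,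
          hU.conjTranspose_mul_self_mul_of_mul_eq_modulus hB]
    _ = Uᴴ * ((U * A) * (U * B)ᴴ) * U := by
        simp only [conjTranspose_mul, conjTranspose_conjTranspose, Matrix.mul_assoc]
    _ = 0 := by
        rw [hA, hB, (posSemidef_modulus B).1.eq, hzero, Matrix.mul_zero, Matrix.zero_mul]

end Modulus

end Matrix

/-- Equality in the triangle inequality for the trace norm over a pairwise orthogonal
family implies `AᵢAⱼ* = 0` and `Aᵢ*Aⱼ = 0` for `i ≠ j`. -/
theorem stmt5 (r p q : ℕ) (A : Fin r → Matrix (Fin p) (Fin q) ℂ)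
    (horth : ∀ i j, i ≠ j → ((A i)ᴴ * A j).trace = 0)
    (h : traceNorm (∑ i, A i) = ∑ i, traceNorm (A i)) :
    ∀ i j, i ≠ j → A i * (A j)ᴴ = 0 ∧ (A i)ᴴ * A j = 0 := by
  obtain ⟨U, hU, hUS⟩ := exists_isPartialIsometry_mul_eq_modulus (∑ i, A i)
  have hsum : ∑ i, (U * A i).trace.re = ∑ i, traceNorm (A i) := by
    rw [← h, traceNorm_eq_re_trace_modulus, ← hUS, Matrix.mul_sum, trace_sum, Complex.re_sum]
  have hUA : ∀ i, U * A i = modulus (A i) := fun i =>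
    hU.mul_eq_modulus_of_traceNorm_le <| le_of_eq <| Eq.symm <|
      (Finset.sum_eq_sum_iff_of_le fun i _ => hU.re_trace_mul_le_traceNorm (A i)).mp hsum i
        (Finset.mem_univ i)
  intro i j hij
  exact hU.mul_conjTranspose_eq_zero_and_conjTranspose_mul_eq_zero (hUA i) (hUA j) (horth i j hij)
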